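/- arXiv:1806.04211 — 2 statements merged into one kernel-verified Lean document; each statement's English description precedes it below -/
import Mathlib

section
/- Let α be a positive integer. The image of the map ρ ↦ p_ρ, defined on all 2^α subsets ρ of {1,…,α}, consists of exactly 2^α − α permutations of {1,…,α}. (All α+1 initial segments {1,…,i}, 0 ≤ i ≤ α, map to the identity, and the map is injective on the remaining subsets.) -/
/-!
On positions `< #ρ` the map `p_ρ` enumerates `ρ` increasingly, on the remaining positions it
enumerates `ρᶜ` increasingly, so `p_ρ` is the identity exactly when it is strictly monotone
across the boundary `#ρ`, i.e. when `ρ` is an initial segment. The first `#ρ` values of `p_ρ`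
recover `ρ`, so `p_ρ = p_σ` with `#ρ = #σ` forces `ρ = σ`. If `#ρ < #σ` and `p_ρ = p_σ`, then
`p_ρ` is increasing on `[0, #σ)` and on `[#ρ, α)`, hence everywhere, so `p_ρ = id`. Thus the
`α + 1` initial segments collapse to one point and the map is injective elsewhere.
-/

/-- The map `p_ρ : {1,…,α} → {1,…,α}` associated to a subset `ρ ⊆ {1,…,α}` of
cardinality `s`: it sends the first `s` positions to the elements of `ρ` in increasing
order and the remaining positions to the elements of the complement of `ρ` in
increasing order. -/
def pFun {n : ℕ} (ρ : Finset (Fin n)) : Fin n → Fin n :=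
  fun i =>
    if h : (i : ℕ) < ρ.card then ρ.orderEmbOfFin rfl ⟨(i : ℕ), h⟩
    else ρᶜ.orderEmbOfFin (k := n - ρ.card) (by simp [Finset.card_compl])
      ⟨(i : ℕ) - ρ.card, by have := i.isLt; omega⟩

open Finset

theorem strictMono_of_isLowerSet {α β : Type*} [LinearOrder α] [Preorder β] {f : α → β}
    {s : Set α} (hs : IsLowerSet s) (hlow : StrictMonoOn f s) (hupp : StrictMonoOn f sᶜ)
    (hcross : ∀ i ∈ s, ∀ j ∉ s, f i < f j) : StrictMono f := by
  intro i j hij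
  by_cases hi : i ∈ s <;> by_cases hj : j ∈ s
  · exact hlow hi hj hij
  · exact hcross i hi j hj
  · exact absurd (hs hij.le hj) hi
  · exact hupp hi hj hij

theorem Finset.card_image_eq_card_filter_ne_add_one {α β : Type*} [DecidableEq β]
    {s : Finset α} {f : α → β} {b : β} (hb : b ∈ s.image f)
    (hinj : Set.InjOn f ({a ∈ s | f a ≠ b} : Finset α)) :
    #(s.image f) = #{a ∈ s | f a ≠ b} + 1 := by
  have himage : s.image f = insert b ({a ∈ s | f a ≠ b}.image f) := by
    ext c
    simp only [mem_image, mem_insert, mem_filter]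
    constructor
    · rintro ⟨a, ha, rfl⟩
      by_cases hab : f a = b
      · exact .inl hab
      · exact .inr ⟨a, ⟨ha, hab⟩, rfl⟩
    · rintro (rfl | ⟨a, ⟨ha, -⟩, rfl⟩)
      exacts [mem_image.mp hb, ⟨a, ha, rfl⟩]
  have hnotMem : b ∉ {a ∈ s | f a ≠ b}.image f := by
    simp only [mem_image, mem_filter]
    rintro ⟨a, ⟨-, hab⟩, rfl⟩
    exact hab rfl
  rw [himage, card_insert_of_notMem hnotMem, card_image_of_injOn hinj]

section

variable {n : ℕ} {ρ σ : Finset (Fin n)} {i : Fin n}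

theorem pFun_of_lt_card (h : (i : ℕ) < #ρ) : pFun ρ i = ρ.orderEmbOfFin rfl ⟨i, h⟩ :=
  dif_pos h

theorem pFun_of_card_le (h : #ρ ≤ (i : ℕ)) :
    pFun ρ i = ρᶜ.orderEmbOfFin (k := n - #ρ) (by simp [card_compl])
      ⟨(i : ℕ) - #ρ, by have := i.isLt; omega⟩ :=
  dif_neg h.not_gt

theorem pFun_mem (h : (i : ℕ) < #ρ) : pFun ρ i ∈ ρ := by
  rw [pFun_of_lt_card h]
  exact orderEmbOfFin_mem _ _ _

theorem pFun_notMem (h : #ρ ≤ (i : ℕ)) : pFun ρ i ∉ ρ := by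
  rw [← mem_compl, pFun_of_card_le h]
  exact orderEmbOfFin_mem _ _ _

theorem strictMonoOn_pFun_lt_card : StrictMonoOn (pFun ρ) {i | (i : ℕ) < #ρ} := by
  intro i hi j hj hij
  rw [pFun_of_lt_card hi, pFun_of_lt_card hj]
  exact (ρ.orderEmbOfFin rfl).strictMono (Fin.mk_lt_mk.mpr hij)

theorem strictMonoOn_pFun_card_le : StrictMonoOn (pFun ρ) {i | (i : ℕ) < #ρ}ᶜ := by
  intro i hi j hj hij
  simp only [Set.mem_compl_iff, Set.mem_ofPred_eq, not_lt] at hi hj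
  rw [pFun_of_card_le hi, pFun_of_card_le hj]
  exact (ρᶜ.orderEmbOfFin _).strictMono (Fin.mk_lt_mk.mpr (by omega))

theorem pFun_eq_id_of_forall_lt (hcross : ∀ i j : Fin n, (i : ℕ) < #ρ → #ρ ≤ (j : ℕ) →
    pFun ρ i < pFun ρ j) : pFun ρ = id :=
  StrictMono.eq_id <| strictMono_of_isLowerSet (s := {i | (i : ℕ) < #ρ})
    (fun _ _ hle hj => (Fin.le_def.mp hle).trans_lt hj)
    strictMonoOn_pFun_lt_card strictMonoOn_pFun_card_le
    fun i hi j hj => hcross i j hi (not_lt.mp hj)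

theorem exists_pFun_eq {x : Fin n} (hx : x ∈ ρ) : ∃ i : Fin n, (i : ℕ) < #ρ ∧ pFun ρ i = x := by
  rw [← mem_coe, ← range_orderEmbOfFin ρ rfl] at hx
  obtain ⟨k, rfl⟩ := hx
  have hk : (k : ℕ) < n := k.isLt.trans_le (card_le_univ ρ |>.trans_eq (Fintype.card_fin n))
  exact ⟨⟨k, hk⟩, k.isLt, pFun_of_lt_card k.isLt⟩

theorem pFun_filter_val_lt {s : ℕ} : pFun ({i : Fin n | (i : ℕ) < s} : Finset (Fin n)) = id := by
  refine pFun_eq_id_of_forall_lt fun i j hi hj => ?_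
  have hlt := pFun_mem hi
  have hge := pFun_notMem hj
  simp only [mem_filter, mem_univ, true_and] at hlt hge
  exact Fin.lt_def.mpr (by omega)

theorem eq_of_pFun_eq_of_card_eq (h : pFun ρ = pFun σ) (hc : #ρ = #σ) : ρ = σ := by
  refine eq_of_subset_of_card_le (fun x hx => ?_) hc.ge
  obtain ⟨i, hi, rfl⟩ := exists_pFun_eq hx
  rw [h]
  exact pFun_mem (hc ▸ hi)

theorem pFun_eq_id_of_pFun_eq_of_card_lt (h : pFun ρ = pFun σ) (hc : #ρ < #σ) : pFun ρ = id := by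
  refine pFun_eq_id_of_forall_lt fun i j hi hj => ?_
  by_cases hjσ : (j : ℕ) < #σ
  · rw [h]
    exact strictMonoOn_pFun_lt_card (hi.trans hc) hjσ (Fin.lt_def.mpr (by omega))
  · have hm : #ρ < n := hc.trans_le (card_le_univ σ |>.trans_eq (Fintype.card_fin n))
    let m : Fin n := ⟨#ρ, hm⟩
    calc pFun ρ i = pFun σ i := by rw [h]
      _ < pFun σ m := strictMonoOn_pFun_lt_card (hi.trans hc) hc (Fin.mk_lt_mk.mpr hi)
      _ = pFun ρ m := by rw [h]
      _ ≤ pFun ρ j := strictMonoOn_pFun_card_le.monotoneOn (lt_irrefl (#ρ)) (not_lt.mpr hj) hj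

theorem eq_of_pFun_eq (h : pFun ρ = pFun σ) (hρ : pFun ρ ≠ id) : ρ = σ := by
  rcases lt_trichotomy #ρ #σ with hc | hc | hc
  · exact absurd (pFun_eq_id_of_pFun_eq_of_card_lt h hc) hρ
  · exact eq_of_pFun_eq_of_card_eq h hc
  · exact absurd (h ▸ pFun_eq_id_of_pFun_eq_of_card_lt h.symm hc) hρ

theorem card_filter_pFun_eq_id : #{ρ : Finset (Fin n) | pFun ρ = id} = n + 1 := by
  rw [← card_range (n + 1)]
  refine card_nbij (fun ρ => #ρ) (fun ρ _ => mem_range.mpr (Nat.lt_succ_of_le ?_))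
    (fun ρ hρ σ hσ hc => ?_) (fun s hs => ?_)
  · simpa using card_le_univ ρ
  · simp only [coe_filter, mem_univ, true_and, Set.mem_ofPred_eq] at hρ hσ
    exact eq_of_pFun_eq_of_card_eq (hρ.trans hσ.symm) hc
  · refine ⟨({i : Fin n | (i : ℕ) < s} : Finset (Fin n)), by simp [pFun_filter_val_lt], ?_⟩
    simp only [Fin.card_filter_val_lt]
    exact min_eq_right (Nat.lt_succ_iff.mp (mem_range.mp hs))

end

theorem pFun_image_card_general {α : ℕ} :
    (Finset.univ.image (fun ρ : Finset (Fin α) => pFun ρ)).card = 2 ^ α - α := by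
  have hid : id ∈ univ.image (fun ρ : Finset (Fin α) => pFun ρ) :=
    mem_image.mpr ⟨({i | (i : ℕ) < 0} : Finset (Fin α)), mem_univ _, pFun_filter_val_lt⟩
  have hsplit := card_filter_add_card_filter_not (s := univ) fun ρ : Finset (Fin α) => pFun ρ = id
  rw [card_filter_pFun_eq_id, card_univ, Fintype.card_finset, Fintype.card_fin] at hsplit
  simp only [← ne_eq] at hsplit
  rw [card_image_eq_card_filter_ne_add_one hid fun ρ hρ σ _ h =>
    eq_of_pFun_eq h (mem_filter.mp hρ).2]
  have := Nat.lt_two_pow_self (n := α)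
  omega

/-- The image of the map `ρ ↦ p_ρ`, defined on all `2^α` subsets `ρ` of `{1,…,α}`,
consists of exactly `2^α − α` permutations of `{1,…,α}`. -/
theorem pFun_image_card {α : ℕ} (hα : 0 < α) :
    (Finset.univ.image (fun ρ : Finset (Fin α) => pFun ρ)).card = 2 ^ α - α :=
  pFun_image_card_general
end

section
/- Let F be a field, β and r positive integers, γ ⊆ {1,…,β} a subset of cardinality r, and H₁ an r×β matrix over F such that H₁·γ^tr = −1_r (the columns of H₁ indexed by γ form the negative identity matrix); set R₀ := H₁·γ̄^tr. Then for every α×β matrix C over F, the rank of the (r+α)×β matrix obtained by stacking H₁ on top of C equals r + rank(C·γ̄^tr + (C·γ^tr)·R₀). (This is the mathematical content of the ClearDown step: the pivotal columns of C are cleared using the echelonised rows H₁, and only the updated non-pivotal columns contribute additional rank.) -/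
open Matrix

/-!
Reorder the columns so that those indexed by `γ` come first. The stacked matrix becomes the
block matrix `[[-1, R₀], [C γᵀ, C γ̄ᵀ]]`. A block matrix `[[A, B], [C, D]]` with `A` invertible
factors as unitriangular × `diag(A, D - C A⁻¹ B)` × unitriangular, so its rank is
`|A| + rank (D - C A⁻¹ B)`; here the Schur complement is `C γ̄ᵀ + (C γᵀ) R₀`.
-/

/-- The row-select matrix associated to a subset `ρ` of `{1,…,α}` of cardinality `s`:
the `s × α` matrix whose `(i,j)` entry is `1` if `j` is the `i`-th element of `ρ`
(in increasing order) and `0` otherwise. -/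
def rowSelect {F : Type*} [Field F] {α s : ℕ} (ρ : Finset (Fin α)) (h : ρ.card = s) :
    Matrix (Fin s) (Fin α) F :=
  fun i j => if j = ρ.orderEmbOfFin h i then 1 else 0

/-- The column-select matrix associated to a subset `γ` of `{1,…,β}`:
the transpose of the row-select matrix. -/
def colSelect {F : Type*} [Field F] {β r : ℕ} (γ : Finset (Fin β)) (h : γ.card = r) :
    Matrix (Fin β) (Fin r) F :=
  (rowSelect γ h)ᵀ

theorem Submodule.finrank_prod {K V W : Type*} [Field K] [AddCommGroup V] [Module K V]
    [AddCommGroup W] [Module K W] [FiniteDimensional K V] [FiniteDimensional K W]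
    (p : Submodule K V) (q : Submodule K W) :
    Module.finrank K (p.prod q) = Module.finrank K p + Module.finrank K q := by
  rw [← p.range_subtype, ← q.range_subtype, ← LinearMap.range_prodMap,
    LinearMap.finrank_range_of_inj (p.injective_subtype.prodMap q.injective_subtype),
    Module.finrank_prod, p.range_subtype, q.range_subtype]

namespace Matrix

section BlockRank

variable {K : Type*} [Field K] {l m n o : Type*} [Fintype l] [Fintype n]

theorem mulVecLin_fromBlocks_zero_zero (A : Matrix m l K) (D : Matrix o n K) :
    (fromBlocks A 0 0 D).mulVecLin =
      (LinearEquiv.sumArrowLequivProdArrow m o K K).symm.toLinearMap ∘ₗ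
        A.mulVecLin.prodMap D.mulVecLin ∘ₗ
          (LinearEquiv.sumArrowLequivProdArrow l n K K).toLinearMap := by
  ext v (i | i) <;> simp [fromBlocks_mulVec] <;> rfl

theorem rank_fromBlocks_zero_zero [Finite m] [Finite o] (A : Matrix m l K) (D : Matrix o n K) :
    (fromBlocks A 0 0 D).rank = A.rank + D.rank := by
  rw [rank, mulVecLin_fromBlocks_zero_zero, LinearMap.range_comp,
    LinearMap.range_comp_of_range_eq_top _ (LinearEquiv.range _), LinearEquiv.finrank_map_eq,
    LinearMap.range_prodMap, Submodule.finrank_prod, rank, rank]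

theorem rank_fromBlocks_of_invertible₁₁ [Fintype m] [Fintype o]
    [DecidableEq m] [DecidableEq n] [DecidableEq o] (A : Matrix m m K) (B : Matrix m n K)
    (C : Matrix o m K) (D : Matrix o n K) [Invertible A] :
    (fromBlocks A B C D).rank = Fintype.card m + (D - C * ⅟A * B).rank := by
  have hL : IsUnit (fromBlocks 1 0 (C * ⅟A) 1 : Matrix (m ⊕ o) (m ⊕ o) K).det := by simp
  have hU : IsUnit (fromBlocks 1 (⅟A * B) 0 1 : Matrix (m ⊕ n) (m ⊕ n) K).det := by simp
  rw [fromBlocks_eq_of_invertible₁₁, rank_mul_eq_left_of_isUnit_det _ _ hU,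
    rank_mul_eq_right_of_isUnit_det _ _ hL, rank_fromBlocks_zero_zero,
    rank_of_isUnit A (isUnit_of_invertible A)]

end BlockRank
end Matrix

section ColumnSelect

variable {F : Type*} [Field F] {m : Type*} {β r s : ℕ}

theorem mul_colSelect (A : Matrix m (Fin β) F) (γ : Finset (Fin β)) (h : γ.card = r) :
    A * colSelect (F := F) γ h = A.submatrix id (γ.orderEmbOfFin h) := by
  ext i k
  simp [mul_apply, colSelect, rowSelect, transpose_apply]

theorem mul_fromCols_colSelect_compl (A : Matrix m (Fin β) F) {γ : Finset (Fin β)}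
    (hγ : γ.card = r) (hγc : γᶜ.card = s) :
    A * fromCols (colSelect (F := F) γ hγ) (colSelect γᶜ hγc) =
      A.submatrix id (finSumEquivOfFinset hγ hγc) := by
  rw [mul_fromCols, mul_colSelect, mul_colSelect]
  ext i (k | k) <;> rfl

theorem rank_mul_fromCols_colSelect_compl [Fintype m] (A : Matrix m (Fin β) F)
    {γ : Finset (Fin β)} (hγ : γ.card = r) (hγc : γᶜ.card = s) :
    (A * fromCols (colSelect (F := F) γ hγ) (colSelect γᶜ hγc)).rank = A.rank := by
  rw [mul_fromCols_colSelect_compl]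
  exact rank_submatrix A (Equiv.refl m) _

end ColumnSelect

/-- ClearDown rank identity: if the columns of `H₁ ∈ F^{r×β}` indexed by `γ` form `−1_r`
and `R₀ := H₁ γ̄ᵀ`, then for every `C ∈ F^{α×β}`, stacking `H₁` on top of `C` gives a
matrix of rank `r + rank(C γ̄ᵀ + (C γᵀ) R₀)`. -/
theorem clearDown_rank
    {F : Type*} [Field F] {β r : ℕ}
    (γ : Finset (Fin β)) (hγ : γ.card = r)
    (H₁ : Matrix (Fin r) (Fin β) F)
    (hpiv : H₁ * colSelect (F := F) γ hγ = -1)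
    {α : ℕ} (C : Matrix (Fin α) (Fin β) F) :
    (Matrix.fromRows H₁ C).rank =
      r + (C * colSelect (F := F) (r := β - r) γᶜ (by simp [Finset.card_compl, hγ]) +
            (C * colSelect (F := F) γ hγ) *
              (H₁ * colSelect (F := F) (r := β - r) γᶜ
                (by simp [Finset.card_compl, hγ]))).rank := by
  have hγc : γᶜ.card = β - r := by simp [Finset.card_compl, hγ]
  have : Invertible (-1 : Matrix (Fin r) (Fin r) F) := ⟨-1, by simp, by simp⟩
  rw [← rank_mul_fromCols_colSelect_compl (fromRows H₁ C) hγ hγc, fromRows_mul_fromCols, hpiv,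
    rank_fromBlocks_of_invertible₁₁, Fintype.card_fin,
    invOf_eq_right_inv (by simp : (-1 : Matrix (Fin r) (Fin r) F) * -1 = 1)]
  simp [sub_eq_add_neg]
end
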